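/- arXiv:2405.02836 — 2 statements merged into one kernel-verified Lean document; each statement's English description precedes it below -/
import Mathlib

section
/- Let R ∈ ℝ[[x_1,...,x_m]] be a formal power series with R(0)=0 and dR(0) ≠ 0, generating the principal ideal of a formal hypersurface Y ⊂ ℝ^m, and let A: (ℝ^s,0) → (ℝ^m,0) be any formal power series map. Then there exists a formal power series map Ã: (ℝ^s,0) → (ℝ^m,0) such that (1) R ∘ Ã = 0, and (2) each component of Ã − A belongs to the principal ideal of ℝ[[t_1,...,t_s]] generated by R ∘ A. -/
open MvPowerSeries Finsupp

/-- Formal partial derivative `∂_i` of a multivariate power series. -/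
noncomputable def psDeriv {σ K : Type*} [DecidableEq σ] [CommRing K]
    (i : σ) (f : MvPowerSeries σ K) : MvPowerSeries σ K :=
  fun α => ((α i + 1 : ℕ) : K) * MvPowerSeries.coeff (α + Finsupp.single i 1) f

/-- Application of a formal vector field `L = Σ L_j ∂_j` to a formal power series. -/
noncomputable def vfApply {m : ℕ} {K : Type*} [CommRing K]
    (L : Fin m → MvPowerSeries (Fin m) K) (f : MvPowerSeries (Fin m) K) :
    MvPowerSeries (Fin m) K :=
  ∑ j, L j * psDeriv j f

/-- A formal vector field is tangent to a formal submanifold given by an ideal `I`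
if it preserves `I`. -/
def VTangent {m : ℕ} {K : Type*} [CommRing K]
    (L : Fin m → MvPowerSeries (Fin m) K) (I : Ideal (MvPowerSeries (Fin m) K)) : Prop :=
  ∀ f ∈ I, vfApply L f ∈ I

/-- A manifold ideal of codimension `k`: generated by `k` series vanishing at `0`
with linearly independent differentials at `0`. -/
def IsManifoldIdeal {m : ℕ} {K : Type*} [Field K]
    (I : Ideal (MvPowerSeries (Fin m) K)) (k : ℕ) : Prop :=
  ∃ F : Fin k → MvPowerSeries (Fin m) K,
    I = Ideal.span (Set.range F) ∧
    (∀ j, MvPowerSeries.constantCoeff (F j) = 0) ∧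
    LinearIndependent K (fun j => fun i => MvPowerSeries.coeff (Finsupp.single i 1) (F j))

/-- Composition (substitution) `R ∘ A` of a formal power series `R` in `m` indeterminates
with an `m`-tuple `A` of formal power series (meaningful when each `A j` has zero constant
term, in which case only finitely many terms contribute to each coefficient). -/
noncomputable def psComp {m : ℕ} {τ : Type*} [Fintype τ] [DecidableEq τ] {K : Type*} [CommRing K]
    (A : Fin m → MvPowerSeries τ K) (R : MvPowerSeries (Fin m) K) : MvPowerSeries τ K :=
  fun β => ∑ α ∈ Finset.Iic (Finsupp.equivFunOnFinite.symm (fun _ : Fin m => β.sum fun _ k => k)),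
      MvPowerSeries.coeff α R * MvPowerSeries.coeff β (∏ j, (A j) ^ (α j))

/-!
Choose `i` with `c = ∂ᵢR(0) ≠ 0` and look for `Ã = A + D eᵢ`. If `P` and `Q` have zero
constant terms and differ only in the `i`-th slot, dividing `R` termwise by `Pᵢ - Qᵢ` gives
`R ∘ P - R ∘ Q = (Pᵢ - Qᵢ) E` with `E(0) = c`. Hence the chord step
`D ↦ D - c⁻¹ R(A + D eᵢ)` raises the order of differences by one, so its iterates from `0`
converge `𝔪`-adically to a fixed point `D`, that is, `R(A + D eᵢ) = 0`. The same identity for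
`A + D eᵢ` and `A` reads `-(R ∘ A) = D E` with `E` a unit, so `D ∈ (R ∘ A)`.
-/

open Finset

section DiffQuot

variable {ι S : Type*} [Fintype ι] [DecidableEq ι] [CommRing S]

def prodPowDiffQuot (i : ι) (P Q : ι → S) (α : ι →₀ ℕ) : S :=
  (∑ k ∈ range (α i), P i ^ k * Q i ^ (α i - 1 - k)) * ∏ j ∈ univ.erase i, P j ^ α j

theorem prod_pow_sub_prod_pow_eq_mul {i : ι} {P Q : ι → S} (hPQ : ∀ j ≠ i, P j = Q j)
    (α : ι →₀ ℕ) :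
    ∏ j, P j ^ α j - ∏ j, Q j ^ α j = (P i - Q i) * prodPowDiffQuot i P Q α := by
  rw [← mul_prod_erase univ (fun j => P j ^ α j) (mem_univ i),
    ← mul_prod_erase univ (fun j => Q j ^ α j) (mem_univ i)]
  have hrest : ∏ j ∈ univ.erase i, Q j ^ α j = ∏ j ∈ univ.erase i, P j ^ α j :=
    prod_congr rfl fun j hj => by rw [hPQ j (ne_of_mem_erase hj)]
  rw [hrest, prodPowDiffQuot, ← sub_mul, ← geom_sum₂_mul]
  ring

end DiffQuot

theorem finsum_eq_sum_of_forall_degree_le {ι M : Type*} [AddCommMonoid M]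
    {f : (ι →₀ ℕ) → M} {n : ℕ} (hf : ∀ α, n < degree α → f α = 0)
    {T : Finset (ι →₀ ℕ)} (hT : ∀ α, degree α ≤ n → α ∈ T) :
    ∑ᶠ α, f α = ∑ α ∈ T, f α :=
  finsum_eq_sum_of_support_subset f fun α hα => hT α (not_lt.1 fun h => hα (hf α h))

namespace MvPowerSeries

section Order

variable {σ K : Type*} [CommRing K]

theorem le_order_sum {ι : Type*} {s : Finset ι} {f : ι → MvPowerSeries σ K} {n : ℕ∞}
    (h : ∀ i ∈ s, n ≤ (f i).order) : n ≤ (∑ i ∈ s, f i).order :=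
  le_order fun d hd => by
    rw [map_sum]
    exact Finset.sum_eq_zero fun i hi => coeff_of_lt_order (hd.trans_le (h i hi))

theorem eq_zero_of_forall_nat_le_order {f : MvPowerSeries σ K}
    (h : ∀ n : ℕ, (n : ℕ∞) ≤ f.order) : f = 0 := by
  ext d
  exact coeff_of_lt_order ((Nat.cast_lt.2 (Nat.lt_succ_self _)).trans_le (h _))

theorem exists_le_order_sub_of_le_order_succ_sub {x : ℕ → MvPowerSeries σ K}
    (hx : ∀ n : ℕ, (n : ℕ∞) ≤ (x (n + 1) - x n).order) :
    ∃ y : MvPowerSeries σ K, ∀ n : ℕ, (n : ℕ∞) ≤ (y - x n).order := by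
  have stable : ∀ n k : ℕ, (n : ℕ∞) ≤ (x (n + k) - x n).order := by
    intro n k
    induction k with
    | zero => simp
    | succ k ih =>
      calc (n : ℕ∞) ≤ min (x (n + k + 1) - x (n + k)).order (x (n + k) - x n).order :=
            le_min ((Nat.cast_le.2 (Nat.le_add_right n k)).trans (hx _)) ih
        _ ≤ _ := by
          rw [← add_assoc, ← sub_add_sub_cancel (x (n + k + 1)) (x (n + k)) (x n)]
          exact min_order_le_add
  refine ⟨fun d => coeff d (x (degree d + 1)), fun n => le_order fun d hd => ?_⟩
  obtain ⟨k, rfl⟩ := Nat.exists_eq_add_of_le (Nat.cast_lt.1 hd : degree d < n)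
  have := coeff_of_lt_order (f := x (degree d + 1 + k) - x (degree d + 1))
    ((Nat.cast_lt.2 (Nat.lt_succ_self _)).trans_le (stable _ k))
  show coeff d (x (degree d + 1)) - coeff d (x (degree d + 1 + k)) = 0
  rw [← neg_sub, ← map_sub, this, neg_zero]

theorem exists_fixedPoint_of_order_contracting (φ : MvPowerSeries σ K → MvPowerSeries σ K)
    (hφ : ∀ D, constantCoeff D = 0 → constantCoeff (φ D) = 0)
    (hcontr : ∀ D D', constantCoeff D = 0 → constantCoeff D' = 0 →
      (D - D').order + 1 ≤ (φ D - φ D').order) :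
    ∃ D, constantCoeff D = 0 ∧ φ D = D := by
  set x : ℕ → MvPowerSeries σ K := fun n => φ^[n] 0
  have hx_succ (n : ℕ) : x (n + 1) = φ (x n) := Function.iterate_succ_apply' φ n 0
  have hx0 (n : ℕ) : constantCoeff (x n) = 0 := by
    induction n with
    | zero => exact map_zero _
    | succ n ih => rw [hx_succ]; exact hφ _ ih
  have hx (n : ℕ) : (n : ℕ∞) ≤ (x (n + 1) - x n).order := by
    induction n with
    | zero => simp
    | succ n ih =>
      have := hcontr _ _ (hx0 (n + 1)) (hx0 n)
      rw [← hx_succ, ← hx_succ] at this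
      exact (by simpa using ih : ((n + 1 : ℕ) : ℕ∞) ≤ _ + 1).trans this
  obtain ⟨y, hy⟩ := exists_le_order_sub_of_le_order_succ_sub hx
  have hy0 : constantCoeff y = 0 := by
    have := one_le_order_iff_constCoeff_eq_zero.1 (by exact_mod_cast hy 1)
    rwa [map_sub, hx0, sub_zero] at this
  refine ⟨y, hy0, sub_eq_zero.1 (eq_zero_of_forall_nat_le_order fun n => ?_)⟩
  have hφy : ((n + 1 : ℕ) : ℕ∞) ≤ (φ y - φ (x n)).order := by
    calc ((n + 1 : ℕ) : ℕ∞) = n + 1 := by push_cast; rfl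
      _ ≤ (y - x n).order + 1 := by gcongr; exact hy n
      _ ≤ _ := hcontr _ _ hy0 (hx0 n)
  have hyx : ((n + 1 : ℕ) : ℕ∞) ≤ (x (n + 1) - y).order := by
    rw [← order_neg, neg_sub]; exact hy _
  calc (n : ℕ∞) ≤ min (φ y - φ (x n)).order (x (n + 1) - y).order :=
        le_min ((Nat.cast_le.2 n.le_succ).trans hφy) ((Nat.cast_le.2 n.le_succ).trans hyx)
    _ ≤ _ := by
      rw [hx_succ, ← sub_add_sub_cancel (φ y) (φ (x n)) y]
      exact min_order_le_add

end Order

section DiffQuot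

variable {ι τ K : Type*} [Fintype ι] [DecidableEq ι] [CommRing K]
  {i : ι} {P Q : ι → MvPowerSeries τ K}

theorem le_order_prodPowDiffQuot (hP : ∀ j, constantCoeff (P j) = 0)
    (hQ : constantCoeff (Q i) = 0) (α : ι →₀ ℕ) :
    ((degree α - 1 : ℕ) : ℕ∞) ≤ (prodPowDiffQuot i P Q α).order := by
  have hsum : ((α i - 1 : ℕ) : ℕ∞) ≤
      (∑ k ∈ range (α i), P i ^ k * Q i ^ (α i - 1 - k)).order := by
    refine le_order_sum fun k hk => ?_
    calc ((α i - 1 : ℕ) : ℕ∞) = k + (α i - 1 - k : ℕ) := by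
          rw [mem_range] at hk; norm_cast; omega
      _ ≤ _ := (add_le_add (le_order_pow_of_constantCoeff_eq_zero k (hP i))
          (le_order_pow_of_constantCoeff_eq_zero _ hQ)).trans le_order_mul
  have hprod :
      ((∑ j ∈ univ.erase i, α j : ℕ) : ℕ∞) ≤ (∏ j ∈ univ.erase i, P j ^ α j).order := by
    push_cast
    exact (sum_le_sum fun j _ => le_order_pow_of_constantCoeff_eq_zero _ (hP j)).trans
      (le_order_prod _ _)
  have hdeg : degree α = α i + ∑ j ∈ univ.erase i, α j := by
    rw [degree_eq_sum, Finset.add_sum_erase _ _ (mem_univ i)]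
  calc ((degree α - 1 : ℕ) : ℕ∞)
        ≤ ((α i - 1 : ℕ) : ℕ∞) + ((∑ j ∈ univ.erase i, α j : ℕ) : ℕ∞) := by norm_cast; omega
    _ ≤ _ := (add_le_add hsum hprod).trans le_order_mul

theorem constantCoeff_prodPowDiffQuot (hP : ∀ j, constantCoeff (P j) = 0)
    (hQ : constantCoeff (Q i) = 0) (α : ι →₀ ℕ) :
    constantCoeff (prodPowDiffQuot i P Q α) = if α = single i 1 then 1 else 0 := by
  simp only [prodPowDiffQuot, map_mul, map_sum, map_prod, map_pow, hP, hQ, geom_sum₂_self,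
    prod_pow_eq_pow_sum]
  split_ifs with hα
  · subst hα
    simp [sum_eq_zero fun j hj => single_eq_of_ne (ne_of_mem_erase hj)]
  · rcases Nat.lt_trichotomy (α i) 1 with h | h | h
    · simp [show α i = 0 by omega]
    · have hrest : ∑ j ∈ univ.erase i, α j ≠ 0 := fun h0 => hα <| by
        ext j
        rcases eq_or_ne j i with rfl | hj
        · simp [h]
        · simp [single_eq_of_ne hj, sum_eq_zero_iff.1 h0 j (mem_erase.2 ⟨hj, mem_univ j⟩)]
      simp [zero_pow hrest]
    · simp [zero_pow (show α i - 1 ≠ 0 by omega)]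

end DiffQuot

section Comp

variable {m : ℕ} {τ K : Type*} [CommRing K]

theorem degree_le_order_prod_pow {A : Fin m → MvPowerSeries τ K}
    (hA : ∀ j, constantCoeff (A j) = 0) (α : Fin m →₀ ℕ) :
    ((degree α : ℕ) : ℕ∞) ≤ (∏ j, A j ^ α j).order := by
  rw [degree_eq_sum]
  push_cast
  exact (sum_le_sum fun j _ => le_order_pow_of_constantCoeff_eq_zero _ (hA j)).trans
    (le_order_prod _ _)

noncomputable def psDiffQuot (R : MvPowerSeries (Fin m) K) (i : Fin m)
    (P Q : Fin m → MvPowerSeries τ K) : MvPowerSeries τ K :=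
  fun β => ∑ᶠ α, coeff α R * coeff β (prodPowDiffQuot i P Q α)

variable {i : Fin m} {P Q : Fin m → MvPowerSeries τ K}

theorem coeff_psDiffQuot_eq_sum (hP : ∀ j, constantCoeff (P j) = 0)
    (hQ : constantCoeff (Q i) = 0) (R : MvPowerSeries (Fin m) K) {β : τ →₀ ℕ}
    {T : Finset (Fin m →₀ ℕ)} (hT : ∀ α, degree α ≤ degree β + 1 → α ∈ T) :
    coeff β (psDiffQuot R i P Q) =
      ∑ α ∈ T, coeff α R * coeff β (prodPowDiffQuot i P Q α) :=
  finsum_eq_sum_of_forall_degree_le (fun α h => by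
    rw [coeff_of_lt_order ((Nat.cast_lt.2 (by omega)).trans_le
      (le_order_prodPowDiffQuot hP hQ α)), mul_zero]) hT

theorem constantCoeff_psDiffQuot (hP : ∀ j, constantCoeff (P j) = 0)
    (hQ : constantCoeff (Q i) = 0) (R : MvPowerSeries (Fin m) K) :
    constantCoeff (psDiffQuot R i P Q) = coeff (single i 1) R := by
  rw [← coeff_zero_eq_constantCoeff_apply]
  show ∑ᶠ α, coeff α R * coeff 0 (prodPowDiffQuot i P Q α) = _
  simp only [coeff_zero_eq_constantCoeff_apply, constantCoeff_prodPowDiffQuot hP hQ, mul_ite,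
    mul_one, mul_zero]
  exact (finsum_eq_single _ _ fun α hα => if_neg hα).trans (if_pos rfl)

theorem constantCoeff_update_add {A : Fin m → MvPowerSeries τ K}
    (hA : ∀ j, constantCoeff (A j) = 0)
    {D : MvPowerSeries τ K} (hD : constantCoeff D = 0) (j : Fin m) :
    constantCoeff (Function.update A i (A i + D) j) = 0 := by
  rcases eq_or_ne j i with rfl | hj
  · simp [hA, hD]
  · simp [Function.update_of_ne hj, hA]

variable [Fintype τ] [DecidableEq τ]

theorem coeff_psComp_eq_sum {A : Fin m → MvPowerSeries τ K}
    (hA : ∀ j, constantCoeff (A j) = 0) (R : MvPowerSeries (Fin m) K) {β : τ →₀ ℕ}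
    {T : Finset (Fin m →₀ ℕ)} (hT : ∀ α, degree α ≤ degree β → α ∈ T) :
    coeff β (psComp A R) = ∑ α ∈ T, coeff α R * coeff β (∏ j, A j ^ α j) := by
  have hvanish : ∀ α, degree β < degree α → coeff α R * coeff β (∏ j, A j ^ α j) = 0 :=
    fun α h => by
      rw [coeff_of_lt_order ((Nat.cast_lt.2 h).trans_le (degree_le_order_prod_pow hA α)),
        mul_zero]
  rw [← finsum_eq_sum_of_forall_degree_le hvanish hT]
  exact (finsum_eq_sum_of_forall_degree_le hvanish fun α h =>
    mem_Iic.2 fun j => (le_degree j α).trans h).symm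

theorem constantCoeff_psComp {A : Fin m → MvPowerSeries τ K}
    (hA : ∀ j, constantCoeff (A j) = 0) (R : MvPowerSeries (Fin m) K) :
    constantCoeff (psComp A R) = constantCoeff R := by
  rw [← coeff_zero_eq_constantCoeff_apply,
    coeff_psComp_eq_sum hA R (T := {0}) fun α h => by simpa [degree_eq_zero_iff] using h]
  simp

theorem psComp_sub_psComp (hP : ∀ j, constantCoeff (P j) = 0)
    (hQ : ∀ j, constantCoeff (Q j) = 0) (hPQ : ∀ j ≠ i, P j = Q j)
    (R : MvPowerSeries (Fin m) K) :
    psComp P R - psComp Q R = (P i - Q i) * psDiffQuot R i P Q := by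
  ext β
  set T := (finite_of_degree_le (σ := Fin m) (degree β + 1)).toFinset
  have hT {n : ℕ} (hn : n ≤ degree β) α (h : degree α ≤ n + 1) : α ∈ T := by
    rw [Set.Finite.mem_toFinset]
    exact (by omega : degree α ≤ degree β + 1)
  have hrhs : coeff β ((P i - Q i) * psDiffQuot R i P Q) = ∑ p ∈ antidiagonal β,
      coeff p.1 (P i - Q i) * ∑ α ∈ T, coeff α R * coeff p.2 (prodPowDiffQuot i P Q α) := by
    refine (coeff_mul _ _ _).trans (sum_congr rfl fun p hp => ?_)
    have hdeg : degree p.2 ≤ degree β := by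
      rw [← mem_antidiagonal.1 hp, map_add]
      omega
    rw [coeff_psDiffQuot_eq_sum hP (hQ i) R (hT hdeg)]
  rw [map_sub, coeff_psComp_eq_sum hP R fun α h => hT le_rfl α (by omega),
    coeff_psComp_eq_sum hQ R fun α h => hT le_rfl α (by omega), ← sum_sub_distrib, hrhs]
  simp only [← mul_sub, ← map_sub, prod_pow_sub_prod_pow_eq_mul hPQ, coeff_mul, Finset.mul_sum]
  rw [Finset.sum_comm]
  exact sum_congr rfl fun _ _ => sum_congr rfl fun _ _ => by ring

end Comp

section Newton

variable {m : ℕ} {τ K : Type*} [Fintype τ] [DecidableEq τ] [Field K]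
  {R : MvPowerSeries (Fin m) K} {A : Fin m → MvPowerSeries τ K} {i : Fin m}

/-- Chord method (Newton's method with the derivative frozen at the origin) for
`D ↦ R(A + D eᵢ)`. -/
noncomputable def newtonStep (R : MvPowerSeries (Fin m) K) (A : Fin m → MvPowerSeries τ K)
    (i : Fin m) (D : MvPowerSeries τ K) : MvPowerSeries τ K :=
  D - C (coeff (single i 1) R)⁻¹ * psComp (Function.update A i (A i + D)) R

theorem constantCoeff_newtonStep (hR0 : constantCoeff R = 0)
    (hA : ∀ j, constantCoeff (A j) = 0) {D : MvPowerSeries τ K} (hD : constantCoeff D = 0) :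
    constantCoeff (newtonStep R A i D) = 0 := by
  simp [newtonStep, constantCoeff_psComp (constantCoeff_update_add hA hD), hR0, hD]

theorem order_sub_add_one_le_order_newtonStep_sub (hA : ∀ j, constantCoeff (A j) = 0)
    (hc : coeff (single i 1) R ≠ 0) {D D' : MvPowerSeries τ K} (hD : constantCoeff D = 0)
    (hD' : constantCoeff D' = 0) :
    (D - D').order + 1 ≤ (newtonStep R A i D - newtonStep R A i D').order := by
  have htaylor := psComp_sub_psComp (i := i) (constantCoeff_update_add hA hD)
    (constantCoeff_update_add hA hD')
    (fun j hj => by rw [Function.update_of_ne hj, Function.update_of_ne hj]) R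
  set E := psDiffQuot R i (Function.update A i (A i + D)) (Function.update A i (A i + D'))
  have hE : constantCoeff (1 - C (coeff (single i 1) R)⁻¹ * E) = 0 := by
    simp [E, constantCoeff_psDiffQuot (constantCoeff_update_add hA hD)
      (constantCoeff_update_add hA hD' i), hc]
  have hfactor : newtonStep R A i D - newtonStep R A i D' =
      (D - D') * (1 - C (coeff (single i 1) R)⁻¹ * E) := by
    simp only [Function.update_self] at htaylor
    simp only [newtonStep]
    linear_combination (-C (coeff (single i 1) R)⁻¹) * htaylor
  rw [hfactor]
  exact (add_le_add_right (one_le_order_iff_constCoeff_eq_zero.2 hE) _).trans le_order_mul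

theorem psComp_update_eq_zero_of_newtonStep_eq (hc : coeff (single i 1) R ≠ 0)
    {D : MvPowerSeries τ K} (hfix : newtonStep R A i D = D) :
    psComp (Function.update A i (A i + D)) R = 0 := by
  rw [newtonStep, sub_eq_self] at hfix
  exact (mul_eq_zero.1 hfix).resolve_left (by simpa using hc)

theorem mem_span_psComp_of_psComp_update_eq_zero (hA : ∀ j, constantCoeff (A j) = 0)
    (hc : coeff (single i 1) R ≠ 0) {D : MvPowerSeries τ K} (hD : constantCoeff D = 0)
    (hzero : psComp (Function.update A i (A i + D)) R = 0) :
    D ∈ Ideal.span {psComp A R} := by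
  have htaylor := psComp_sub_psComp (i := i) (constantCoeff_update_add hA hD) hA
    (fun j hj => Function.update_of_ne hj _ A) R
  set E := psDiffQuot R i (Function.update A i (A i + D)) A
  have hE : E * E⁻¹ = 1 := MvPowerSeries.mul_inv_cancel E <| by
    rwa [constantCoeff_psDiffQuot (constantCoeff_update_add hA hD) (hA i)]
  simp only [hzero, Function.update_self, add_sub_cancel_left] at htaylor
  exact Ideal.mem_span_singleton'.2 ⟨-E⁻¹, by linear_combination E⁻¹ * htaylor + D * hE⟩

end Newton

end MvPowerSeries

/-- A formal map can be corrected to a formal map into the hypersurface `{R = 0}`,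
with the correction controlled by the defect `R ∘ A`. -/
theorem stmt_3 {m s : ℕ} (R : MvPowerSeries (Fin m) ℝ)
    (hR0 : MvPowerSeries.constantCoeff R = 0)
    (hdR : ∃ i, MvPowerSeries.coeff (Finsupp.single i 1) R ≠ 0)
    (A : Fin m → MvPowerSeries (Fin s) ℝ)
    (hA : ∀ j, MvPowerSeries.constantCoeff (A j) = 0) :
    ∃ At : Fin m → MvPowerSeries (Fin s) ℝ,
      (∀ j, MvPowerSeries.constantCoeff (At j) = 0) ∧
      psComp At R = 0 ∧
      ∀ j, At j - A j ∈ Ideal.span {psComp A R} := by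
  obtain ⟨i, hc⟩ := hdR
  obtain ⟨D, hD, hfix⟩ := exists_fixedPoint_of_order_contracting (newtonStep R A i)
    (fun _ => constantCoeff_newtonStep hR0 hA)
    (fun _ _ => order_sub_add_one_le_order_newtonStep_sub hA hc)
  have hzero := psComp_update_eq_zero_of_newtonStep_eq hc hfix
  refine ⟨Function.update A i (A i + D), constantCoeff_update_add hA hD, hzero, fun j => ?_⟩
  rcases eq_or_ne j i with rfl | hj
  · simpa using mem_span_psComp_of_psComp_update_eq_zero hA hc hD hzero
  · simp [Function.update_of_ne hj]
end

section
/- Let X ⊂ Y ⊂ ℝ^m be real formal submanifolds given by manifold ideals I(Y) ⊂ I(X) ⊂ ℝ[[x]]. Fix integers 0 < k' ≤ k'' and F ∈ I(X)^{k''} + I(Y). Assume that for all real formal vector fields L^{k'},...,L^1 tangent to Y (i.e., preserving I(Y)), the iterated derivative L^{k'} ⋯ L^1 F lies in I(X)^{k''−k'+1} + I(Y). Then F ∈ I(X)^{k''+1} + I(Y). -/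
open MvPowerSeries Finsupp

/-!
Choose generators `G` of `I(Y)` and `F` of `I(X)`, and complete the differentials of `G` at `0`
to a basis of the span of those of `F` by differentials of some generators `H` among the `F`.
By Nakayama, `I(X) = I(Y) + (H)`. The Jacobian matrix of `(G, H)` has a left inverse with unit
constant term, which yields vector fields `L_i` with `L_i G = 0` (so `L_i` is tangent to `Y`) and
`L_i H_j = δ_ij`.

The Euler field `E = Σ H_i L_i` acts on `I(X)^n + I(Y)` as multiplication by `n` modulo
`I(X)^(n+1) + I(Y)`, and `E g ∈ I(X)^(n+1) + I(Y)` as soon as every `L_i g ∈ I(X)^n + I(Y)`.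
Since `n` is invertible, such a `g` lies in `I(X)^(n+1) + I(Y)`. Peeling off the `k'` derivatives
one at a time, by descending induction, gives the theorem.
-/

namespace Ideal

theorem mul_mem_pow_add_sup {A : Type*} [CommRing A] {I J : Ideal A} {a b : ℕ} {x y : A}
    (hx : x ∈ I ^ a) (hy : y ∈ I ^ b ⊔ J) : x * y ∈ I ^ (a + b) ⊔ J := by
  have hxy : x * y ∈ I ^ a * (I ^ b ⊔ J) := mul_mem_mul hx hy
  rw [mul_sup, ← pow_add] at hxy
  exact (sup_le_sup_left mul_le_right _ : _ ≤ I ^ (a + b) ⊔ J) hxy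

end Ideal

namespace Derivation

variable {R A : Type*} [CommSemiring R] [CommRing A] [Algebra R A] {I J : Ideal A}

section

variable (D : Derivation R A A)

theorem map_mem_span {S : Set A} (hS : ∀ s ∈ S, D s ∈ Ideal.span S) {f : A}
    (hf : f ∈ Ideal.span S) : D f ∈ Ideal.span S := by
  induction hf using Submodule.span_induction with
  | mem s hs => exact hS s hs
  | zero => simp
  | add x y _ _ hx hy => simpa using add_mem hx hy
  | smul a x hx hDx =>
    rw [smul_eq_mul, leibniz, smul_eq_mul, smul_eq_mul]
    exact add_mem (Ideal.mul_mem_left _ _ hDx) (Ideal.mul_mem_right _ _ hx)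

theorem map_mem_pow {n : ℕ} {f : A} (hf : f ∈ I ^ (n + 1)) : D f ∈ I ^ n := by
  induction n generalizing f with
  | zero => simp
  | succ n ih =>
    rw [pow_succ] at hf
    refine Submodule.mul_induction_on hf (fun a ha b hb => ?_) (fun x y hx hy => ?_)
    · rw [leibniz, smul_eq_mul, smul_eq_mul]
      exact add_mem (Ideal.mul_mem_right _ _ ha) (pow_succ' I n ▸ Ideal.mul_mem_mul hb (ih ha))
    · simpa using add_mem hx hy

theorem map_mem_pow_sup (hJ : ∀ y ∈ J, D y ∈ J) {n : ℕ} {f : A}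
    (hf : f ∈ I ^ (n + 1) ⊔ J) :
    D f ∈ I ^ n ⊔ J := by
  obtain ⟨a, ha, y, hy, rfl⟩ := Submodule.mem_sup.mp hf
  rw [map_add]
  exact add_mem (Ideal.mem_sup_left (D.map_mem_pow ha)) (Ideal.mem_sup_right (hJ y hy))

theorem sub_mem_sq_sup_of_mem_span (hDI : ∀ a, D a ∈ I) {S : Set A} (hSI : S ⊆ I)
    (hS : ∀ s ∈ S, D s - s ∈ I ^ 2 ⊔ J) {g : A} (hg : g ∈ Ideal.span S) :
    D g - g ∈ I ^ 2 ⊔ J := by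
  induction hg using Submodule.span_induction with
  | mem s hs => exact hS s hs
  | zero => simp
  | add x y _ _ hx hy => simpa [add_sub_add_comm] using add_mem hx hy
  | smul a x hx hDx =>
    have hxI : x ∈ I := Ideal.span_le.mpr hSI hx
    have split : D (a • x) - a • x = a * (D x - x) + x * D a := by
      rw [smul_eq_mul, leibniz, smul_eq_mul, smul_eq_mul]
      ring
    rw [split]
    exact add_mem (Ideal.mul_mem_left _ _ hDx)
      (Ideal.mem_sup_left (pow_two I ▸ Ideal.mul_mem_mul hxI (hDI a)))

theorem sub_nsmul_mem_pow_sup (hD : ∀ g ∈ I, D g - g ∈ I ^ 2 ⊔ J) {n : ℕ} {g : A}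
    (hg : g ∈ I ^ (n + 1)) : D g - (n + 1) • g ∈ I ^ (n + 2) ⊔ J := by
  induction n generalizing g with
  | zero => simpa using hD g (by simpa using hg)
  | succ n ih =>
    rw [pow_succ] at hg
    refine Submodule.mul_induction_on hg (fun a ha b hb => ?_) (fun x y hx hy => ?_)
    · have split : D (a * b) - (n + 1 + 1) • (a * b) =
          a * (D b - b) + b * (D a - (n + 1) • a) := by
        rw [leibniz, smul_eq_mul, smul_eq_mul]
        simp only [nsmul_eq_mul]
        push_cast
        ring
      rw [split]
      refine add_mem ?_ ?_
      · simpa [add_assoc] using Ideal.mul_mem_pow_add_sup ha (hD b hb)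
      · simpa [add_comm, add_left_comm] using
          Ideal.mul_mem_pow_add_sup (a := 1) (by simpa using hb) (ih ha)
    · simpa [smul_add, add_sub_add_comm] using add_mem hx hy

end

theorem sum_smul_apply {ι : Type*} (s : Finset ι) (H : ι → A) (D : ι → Derivation R A A)
    (f : A) : (∑ i ∈ s, H i • D i) f = ∑ i ∈ s, H i * D i f := by
  simp only [← coeFnAddMonoidHom_apply, map_sum, Finset.sum_apply]
  rfl

theorem sum_smul_apply_sub_self_mem {ι : Type*} [Fintype ι] (H : ι → A)
    (D : ι → Derivation R A A) (hH : ∀ i, H i ∈ I) (hJI : J ≤ I)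
    (hDJ : ∀ i, ∀ y ∈ J, D i y ∈ J) (hDH : ∀ i, D i (H i) = 1)
    (hDH' : Pairwise fun i j => D i (H j) = 0) (hIH : I ≤ J ⊔ Ideal.span (Set.range H))
    {g : A} (hg : g ∈ I) : (∑ i, H i • D i) g - g ∈ I ^ 2 ⊔ J := by
  set E := ∑ i, H i • D i
  have hEI (f : A) : E f ∈ I := by
    rw [sum_smul_apply]
    exact sum_mem fun i _ => Ideal.mul_mem_right _ _ (hH i)
  have hSI : (J : Set A) ∪ Set.range H ⊆ I := Set.union_subset hJI (Set.range_subset_iff.mpr hH)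
  refine E.sub_mem_sq_sup_of_mem_span hEI hSI ?_
    (by rw [Ideal.span_union, Ideal.span_eq]; exact hIH hg)
  rintro s (hs | ⟨j, rfl⟩)
  · rw [sum_smul_apply]
    exact Ideal.mem_sup_right
      (sub_mem (sum_mem fun i _ => Ideal.mul_mem_left _ _ (hDJ i s hs)) hs)
  · rw [sum_smul_apply, Finset.sum_eq_single j (fun i _ hij => by rw [hDH' hij, mul_zero])
      (by simp), hDH, mul_one, sub_self]
    exact zero_mem _

end Derivation

theorem mem_pow_succ_sup_of_forall_derivation_mem {K A ι : Type*} [Field K] [CharZero K]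
    [CommRing A] [Algebra K A] [Fintype ι] {I J : Ideal A} (H : ι → A)
    (D : ι → Derivation K A A) (hH : ∀ i, H i ∈ I) (hJI : J ≤ I)
    (hDJ : ∀ i, ∀ y ∈ J, D i y ∈ J) (hDH : ∀ i, D i (H i) = 1)
    (hDH' : Pairwise fun i j => D i (H j) = 0) (hIH : I ≤ J ⊔ Ideal.span (Set.range H))
    {n : ℕ} {g : A} (hg : g ∈ I ^ (n + 1) ⊔ J) (hDg : ∀ i, D i g ∈ I ^ (n + 1) ⊔ J) :
    g ∈ I ^ (n + 2) ⊔ J := by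
  set E := ∑ i, H i • D i
  have hEJ (y : A) (hy : y ∈ J) : E y ∈ J := by
    rw [Derivation.sum_smul_apply]
    exact sum_mem fun i _ => Ideal.mul_mem_left _ _ (hDJ i y hy)
  have hEg : E g ∈ I ^ (n + 2) ⊔ J := by
    rw [Derivation.sum_smul_apply]
    refine sum_mem fun i _ => ?_
    rw [show n + 2 = 1 + (n + 1) by ring]
    exact Ideal.mul_mem_pow_add_sup (by simpa using hH i) (hDg i)
  have hEuler : E g - (n + 1) • g ∈ I ^ (n + 2) ⊔ J := by
    obtain ⟨a, ha, y, hy, rfl⟩ := Submodule.mem_sup.mp hg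
    have split :
        E (a + y) - (n + 1) • (a + y) = (E a - (n + 1) • a) + (E y - (n + 1) • y) := by
      rw [map_add, smul_add]
      abel
    rw [split]
    refine add_mem (E.sub_nsmul_mem_pow_sup (fun f hf => ?_) ha) (Ideal.mem_sup_right ?_)
    · exact Derivation.sum_smul_apply_sub_self_mem H D hH hJI hDJ hDH hDH' hIH hf
    · exact sub_mem (hEJ y hy) (Submodule.smul_of_tower_mem _ _ hy)
  have hng : ((n + 1 : ℕ) : K) • g ∈ I ^ (n + 2) ⊔ J := by
    rw [Nat.cast_smul_eq_nsmul]
    simpa using sub_mem hEg hEuler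
  simpa [smul_smul, inv_mul_cancel₀ (Nat.cast_add_one_ne_zero (R := K) n)] using
    Submodule.smul_of_tower_mem _ ((n + 1 : ℕ) : K)⁻¹ hng

universe w

theorem exists_linearIndependent_sumElim_complement {K V ι : Type*} {ι' : Type w}
    [DivisionRing K] [AddCommGroup V] [Module K V] {u : ι → V} (hu : LinearIndependent K u)
    (v : ι' → V) :
    ∃ (κ : Type w) (a : κ → ι'), Function.Injective a ∧
      LinearIndependent K (Sum.elim u (v ∘ a)) ∧
      ∀ j, v j ∈ Submodule.span K (Set.range (Sum.elim u (v ∘ a))) := by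
  set U := Submodule.span K (Set.range u)
  obtain ⟨κ, a, ha, hspan, hind⟩ := exists_linearIndependent' K (U.mkQ ∘ v)
  refine ⟨κ, a, ha, hu.sum_type (hind.of_comp _) ?_, fun j => ?_⟩
  · have := Submodule.range_ker_disjoint (f := U.mkQ) (v := v ∘ a) hind
    rw [Submodule.ker_mkQ] at this
    exact this.symm
  · have hj : U.mkQ (v j) ∈ (Submodule.span K (Set.range (v ∘ a))).map U.mkQ := by
      rw [Submodule.map_span, ← Set.range_comp, ← Function.comp_assoc, hspan]
      exact Submodule.subset_span ⟨j, rfl⟩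
    rw [Set.Sum.elim_range, Submodule.span_union, ← Submodule.comap_map_mkQ]
    exact hj

namespace MvPowerSeries

section VectorFields

variable {σ K : Type*} [CommRing K]

theorem psDeriv_eq_pderiv [DecidableEq σ] (i : σ) (f : MvPowerSeries σ K) :
    psDeriv i f = pderiv K i f := by
  ext α
  rw [coeff_pderiv, mul_comm]
  show ((α i + 1 : ℕ) : K) * _ = _
  push_cast
  rfl

variable {m : ℕ}

noncomputable def vfDerivation (L : Fin m → MvPowerSeries (Fin m) K) :
    Derivation K (MvPowerSeries (Fin m) K) (MvPowerSeries (Fin m) K) :=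
  ∑ j, L j • pderiv K j

theorem vfDerivation_apply (L : Fin m → MvPowerSeries (Fin m) K) (f : MvPowerSeries (Fin m) K) :
    vfDerivation L f = vfApply L f := by
  rw [vfDerivation, ← Derivation.coeFnAddMonoidHom_apply, map_sum]
  simp [vfApply, psDeriv_eq_pderiv]

theorem vTangent_iff {L : Fin m → MvPowerSeries (Fin m) K}
    {I : Ideal (MvPowerSeries (Fin m) K)} :
    VTangent L I ↔ ∀ y ∈ I, vfDerivation L y ∈ I := by
  simp only [VTangent, vfDerivation_apply]

theorem foldr_vfApply_mem_pow_sup {I J : Ideal (MvPowerSeries (Fin m) K)} {n t : ℕ}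
    (L : Fin t → Fin m → MvPowerSeries (Fin m) K) (hL : ∀ j, VTangent (L j) J)
    {F : MvPowerSeries (Fin m) K} (hF : F ∈ I ^ (n + t) ⊔ J) :
    (List.ofFn L).foldr vfApply F ∈ I ^ n ⊔ J := by
  induction t generalizing n with
  | zero => simpa using hF
  | succ t ih =>
    rw [List.ofFn_succ, List.foldr_cons, ← vfDerivation_apply]
    exact (vfDerivation _).map_mem_pow_sup (vTangent_iff.mp (hL 0))
      (ih (n := n + 1) _ (fun j => hL j.succ) (by rwa [add_right_comm, add_assoc]))

end VectorFields

section LinearPart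

variable {σ K : Type*} [CommRing K]

noncomputable def linearPart : MvPowerSeries σ K →ₗ[K] σ → K :=
  LinearMap.pi fun i => coeff (single i 1)

theorem linearPart_apply (f : MvPowerSeries σ K) (i : σ) :
    linearPart f i = coeff (single i 1) f :=
  rfl

theorem constantCoeff_psDeriv [DecidableEq σ] (i : σ) (f : MvPowerSeries σ K) :
    constantCoeff (psDeriv i f) = linearPart f i := by
  simp [← coeff_zero_eq_constantCoeff_apply, psDeriv_eq_pderiv, coeff_pderiv, linearPart_apply]

theorem linearPart_mul (f g : MvPowerSeries σ K) :
    linearPart (f * g) = constantCoeff f • linearPart g + constantCoeff g • linearPart f := by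
  classical
  ext i
  simp only [← constantCoeff_psDeriv, psDeriv_eq_pderiv, Derivation.leibniz, smul_eq_mul,
    map_add, map_mul, Pi.add_apply, Pi.smul_apply]

end LinearPart

section Field

variable {σ K : Type*} [Field K]

theorem mem_maximalIdeal_iff_constantCoeff_eq_zero {f : MvPowerSeries σ K} :
    f ∈ IsLocalRing.maximalIdeal (MvPowerSeries σ K) ↔ constantCoeff f = 0 := by
  rw [IsLocalRing.mem_maximalIdeal, mem_nonunits_iff, isUnit_iff_constantCoeff, isUnit_iff_ne_zero,
    not_not]

theorem mem_maximalIdeal_smul_of_linearPart_eq_zero {ι : Type*} [Fintype ι]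
    {F : ι → MvPowerSeries σ K} (hF0 : ∀ j, constantCoeff (F j) = 0)
    (hF : LinearIndependent K fun j => linearPart (F j)) {f : MvPowerSeries σ K}
    (hf : f ∈ Ideal.span (Set.range F)) (h : linearPart f = 0) :
    f ∈ IsLocalRing.maximalIdeal (MvPowerSeries σ K) • Ideal.span (Set.range F) := by
  obtain ⟨c, rfl⟩ := (Submodule.mem_span_range_iff_exists_fun _).1 hf
  have hc : ∀ j, constantCoeff (c j) = 0 := by
    refine Fintype.linearIndependent_iff.1 hF _ ?_
    simpa [linearPart_mul, hF0] using h
  exact sum_mem fun j _ => Submodule.smul_mem_smul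
    (mem_maximalIdeal_iff_constantCoeff_eq_zero.2 (hc j)) (Ideal.subset_span ⟨j, rfl⟩)

theorem span_le_span_of_linearPart_mem_span {ι κ : Type*} [Fintype ι]
    {F : ι → MvPowerSeries σ K} (hF0 : ∀ j, constantCoeff (F j) = 0)
    (hF : LinearIndependent K fun j => linearPart (F j)) {G : κ → MvPowerSeries σ K}
    (hG : ∀ t, G t ∈ Ideal.span (Set.range F))
    (hspan : ∀ j, linearPart (F j) ∈ Submodule.span K (Set.range fun t => linearPart (G t))) :
    Ideal.span (Set.range F) ≤ Ideal.span (Set.range G) := by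
  refine Submodule.le_of_le_smul_of_le_jacobson_bot (Submodule.fg_span (Set.finite_range F))
    (IsLocalRing.maximalIdeal_le_jacobson ⊥) ?_
  rw [Ideal.span_le]
  rintro _ ⟨j, rfl⟩
  have hj := hspan j
  rw [Set.range_comp' linearPart G, Submodule.span_image] at hj
  obtain ⟨w, hw, hwj⟩ := hj
  have hwG : w ∈ Ideal.span (Set.range G) := Submodule.span_le_restrictScalars K _ _ hw
  have hGF : Ideal.span (Set.range G) ≤ Ideal.span (Set.range F) :=
    Ideal.span_le.mpr (Set.range_subset_iff.mpr hG)
  have hrest : F j - w ∈ IsLocalRing.maximalIdeal _ • Ideal.span (Set.range F) :=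
    mem_maximalIdeal_smul_of_linearPart_eq_zero hF0 hF
      (sub_mem (Ideal.subset_span ⟨j, rfl⟩) (hGF hwG)) (by rw [map_sub, hwj, sub_self])
  rw [← add_sub_cancel w (F j)]
  exact Submodule.add_mem_sup hwG hrest

end Field

section Jacobian

variable {m : ℕ} {K : Type*}

noncomputable def jacobian [CommRing K] {ι : Type*} (F : ι → MvPowerSeries (Fin m) K) :
    Matrix (Fin m) ι (MvPowerSeries (Fin m) K) :=
  Matrix.of fun j t => psDeriv j (F t)

theorem vfApply_eq_mul_jacobian [CommRing K] {ι : Type*}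
    (A : Matrix ι (Fin m) (MvPowerSeries (Fin m) K)) (F : ι → MvPowerSeries (Fin m) K)
    (s t : ι) : vfApply (A s) (F t) = (A * jacobian F) s t :=
  rfl

theorem exists_mul_jacobian_eq_one [Field K] {ι : Type*} [Fintype ι] [DecidableEq ι]
    {F : ι → MvPowerSeries (Fin m) K} (hF : LinearIndependent K fun t => linearPart (F t)) :
    ∃ A : Matrix ι (Fin m) (MvPowerSeries (Fin m) K), A * jacobian F = 1 := by
  set ℓ := Fintype.linearCombination K fun t => linearPart (F t)
  obtain ⟨g, hg⟩ := ℓ.exists_leftInverse_of_injective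
    (LinearMap.ker_eq_bot.mpr hF.fintypeLinearCombination_injective)
  set B := (LinearMap.toMatrix' g).map (C : K →+* MvPowerSeries (Fin m) K)
  have hJ : (jacobian F).map constantCoeff = LinearMap.toMatrix' ℓ := by
    ext j t
    simp [jacobian, constantCoeff_psDeriv, LinearMap.toMatrix'_apply, ℓ,
      Fintype.linearCombination_apply_single]
  have hM : (B * jacobian F).map constantCoeff = 1 := by
    have hC : (constantCoeff ∘ C : K → K) = id := funext (constantCoeff_C (σ := Fin m))
    rw [Matrix.map_mul, hJ, Matrix.map_map, hC, Matrix.map_id, ← LinearMap.toMatrix'_comp, hg,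
      LinearMap.toMatrix'_id]
  have hdet : IsUnit (B * jacobian F).det := by
    rw [isUnit_iff_constantCoeff, RingHom.map_det, RingHom.mapMatrix_apply, hM, Matrix.det_one]
    exact isUnit_one
  exact ⟨(B * jacobian F)⁻¹ * B, by rw [Matrix.mul_assoc, Matrix.nonsing_inv_mul _ hdet]⟩

end Jacobian

section Manifold

variable {K : Type*} [Field K] {m : ℕ}

theorem exists_tangent_dual_family {IX IY : Ideal (MvPowerSeries (Fin m) K)} {cX cY : ℕ}
    (hX : IsManifoldIdeal IX cX) (hY : IsManifoldIdeal IY cY) (hXY : IY ≤ IX) :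
    ∃ (κ : Type) (_ : Fintype κ) (H : κ → MvPowerSeries (Fin m) K)
      (L : κ → Fin m → MvPowerSeries (Fin m) K),
      (∀ i, H i ∈ IX) ∧ IX ≤ IY ⊔ Ideal.span (Set.range H) ∧
      (∀ i, VTangent (L i) IY) ∧ (∀ i, vfApply (L i) (H i) = 1) ∧
      Pairwise fun i j => vfApply (L i) (H j) = 0 := by
  classical
  obtain ⟨G, rfl, hG0, hG⟩ := hY
  obtain ⟨F, rfl, hF0, hF⟩ := hX
  obtain ⟨κ, a, ha, hind, hspan⟩ :=
    exists_linearIndependent_sumElim_complement (u := fun t => linearPart (G t)) hG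
      fun j => linearPart (F j)
  have := Finite.of_injective a ha
  have := Fintype.ofFinite κ
  set Fam : Fin cY ⊕ κ → MvPowerSeries (Fin m) K := Sum.elim G (F ∘ a)
  have hFam : (fun s => linearPart (Fam s)) =
      Sum.elim (fun t => linearPart (G t)) ((fun j => linearPart (F j)) ∘ a) := by
    ext (_ | _) <;> rfl
  obtain ⟨A, hA⟩ := exists_mul_jacobian_eq_one (hFam ▸ hind : LinearIndependent K _)
  have hdual (s t) : vfApply (A s) (Fam t) = if s = t then 1 else 0 := by
    rw [vfApply_eq_mul_jacobian, hA, Matrix.one_apply]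
  have hcover : Ideal.span (Set.range F) ≤ Ideal.span (Set.range Fam) :=
    span_le_span_of_linearPart_mem_span hF0 hF
      (by rintro (t | i)
          exacts [hXY (Ideal.subset_span ⟨t, rfl⟩), Ideal.subset_span ⟨a i, rfl⟩])
      (by simpa [hFam] using hspan)
  refine ⟨κ, inferInstance, F ∘ a, fun i => A (.inr i),
    fun i => Ideal.subset_span ⟨a i, rfl⟩,
    by simpa [Fam, Set.Sum.elim_range, Ideal.span_union] using hcover, fun i => ?_,
    fun i => by simpa [Fam] using hdual (.inr i) (.inr i),
    fun i j hij => by simpa [Fam, hij] using hdual (.inr i) (.inr j)⟩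
  refine vTangent_iff.mpr fun f hf => (vfDerivation _).map_mem_span ?_ hf
  rintro _ ⟨t, rfl⟩
  rw [vfDerivation_apply, show G t = Fam (.inl t) from rfl, hdual, if_neg Sum.inr_ne_inl]
  exact zero_mem _

end Manifold

end MvPowerSeries

theorem stmt_5_general {m : ℕ} (IX IY : Ideal (MvPowerSeries (Fin m) ℝ)) (cX cY : ℕ)
    (hX : IsManifoldIdeal IX cX) (hY : IsManifoldIdeal IY cY) (hXY : IY ≤ IX)
    (k' k'' : ℕ) (hk'' : k' ≤ k'')
    (F : MvPowerSeries (Fin m) ℝ) (hF : F ∈ IX ^ k'' + IY)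
    (hder : ∀ L : Fin k' → (Fin m → MvPowerSeries (Fin m) ℝ),
      (∀ j, VTangent (L j) IY) →
      (List.ofFn L).foldr vfApply F ∈ IX ^ (k'' - k' + 1) + IY) :
    F ∈ IX ^ (k'' + 1) + IY := by
  obtain ⟨κ, _, H, L, hH, hIH, hL, hLH, hLH'⟩ := exists_tangent_dual_family hX hY hXY
  simp only [Submodule.add_eq_sup] at hF hder ⊢
  have step {n : ℕ} {g : MvPowerSeries (Fin m) ℝ} (hg : g ∈ IX ^ (n + 1) ⊔ IY)
      (hLg : ∀ i, vfApply (L i) g ∈ IX ^ (n + 1) ⊔ IY) : g ∈ IX ^ (n + 2) ⊔ IY := by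
    simp only [← vfDerivation_apply] at hLg hLH hLH'
    exact mem_pow_succ_sup_of_forall_derivation_mem (K := ℝ) H (fun i => vfDerivation (L i))
      hH hXY (fun i => vTangent_iff.mp (hL i)) hLH hLH' hIH hg hLg
  have key (t : ℕ) (ht : t ≤ k') : ∀ M : Fin t → Fin m → MvPowerSeries (Fin m) ℝ,
      (∀ j, VTangent (M j) IY) →
        (List.ofFn M).foldr vfApply F ∈ IX ^ (k'' - t + 1) ⊔ IY := by
    induction ht using Nat.decreasingInduction with
    | self => exact hder
    | of_succ t ht ih =>
      intro M hM
      obtain ⟨n, hn⟩ : ∃ n, k'' - t = n + 1 := ⟨k'' - t - 1, by omega⟩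
      have hg := foldr_vfApply_mem_pow_sup (I := IX) (n := k'' - t) M hM
        (by rwa [Nat.sub_add_cancel (by omega)])
      have hLg (i : κ) := ih (Fin.cons (L i) M) (Fin.cases (hL i) hM)
      simp only [List.ofFn_succ, Fin.cons_zero, Fin.cons_succ, List.foldr_cons,
        show k'' - (t + 1) + 1 = k'' - t by omega] at hLg
      rw [hn] at hg hLg ⊢
      exact step hg hLg
  simpa using key 0 (Nat.zero_le _) Fin.elim0 (fun j => j.elim0)

/-- Testing vanishing of relative jets by derivatives along vector fields tangent to `Y`:
if `F ∈ I(X)^{k''} + I(Y)` and all iterated derivatives of `F` of length `k'` along vector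
fields tangent to `Y` lie in `I(X)^{k''-k'+1} + I(Y)`, then `F ∈ I(X)^{k''+1} + I(Y)`. -/
theorem stmt_5 {m : ℕ} (IX IY : Ideal (MvPowerSeries (Fin m) ℝ)) (cX cY : ℕ)
    (hX : IsManifoldIdeal IX cX) (hY : IsManifoldIdeal IY cY) (hXY : IY ≤ IX)
    (k' k'' : ℕ) (hk' : 0 < k') (hk'' : k' ≤ k'')
    (F : MvPowerSeries (Fin m) ℝ) (hF : F ∈ IX ^ k'' + IY)
    (hder : ∀ L : Fin k' → (Fin m → MvPowerSeries (Fin m) ℝ),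
      (∀ j, VTangent (L j) IY) →
      (List.ofFn L).foldr vfApply F ∈ IX ^ (k'' - k' + 1) + IY) :
    F ∈ IX ^ (k'' + 1) + IY :=
  stmt_5_general IX IY cX cY hX hY hXY k' k'' hk'' F hF hder
end
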